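/- arXiv:1203.2494 — 3 statements merged into one kernel-verified Lean document; each statement's English description precedes it below -/
import Mathlib

section
/- Let η be a finite measure on [0,1] with total mass z := η([0,1]) > 0, let ρ := z⁻¹η, let φ : [0,1] → ℝ be bounded measurable, m ≥ 1 an integer, ψ : (0,∞) → ℝ twice differentiable at z, and a, b ∈ [0,1]. Define G_a on finite measures μ (with |μ| > 0, normalized measure μ̄ := μ/|μ|) by G_a(μ) := ψ'(|μ|)·⟨φ,μ̄⟩^m + m·(ψ(|μ|)/|μ|)·(φ(a)·⟨φ,μ̄⟩^{m-1} − ⟨φ,μ̄⟩^m), i.e. G_a(μ) is the first Gateaux derivative of μ ↦ ψ(|μ|)⟨φ,μ̄⟩^m in direction δ_a. Then the Gateaux derivative of G_a at η in direction δ_b exists and equals F''(η;a,b) = ψ''(z)·⟨φ,ρ⟩^m + m·(ψ'(z)/z)·[(φ(a)+φ(b))·⟨φ,ρ⟩^{m-1} − 2⟨φ,ρ⟩^m] + m·(ψ(z)/z²)·[(m−1)·φ(a)φ(b)·⟨φ,ρ⟩^{m-2} − m·(φ(a)+φ(b))·⟨φ,ρ⟩^{m-1} + (m+1)·⟨φ,ρ⟩^m],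 where for m = 1 the term with coefficient (m−1) is absent. -/
/-!
Perturbing `η` by `ε δ_b` changes its mass to `z + ε` and `∫ φ dη` to `∫ φ dη + ε φ(b)`, so
`G_a(η + ε δ_b)` is an explicit function of the real variable `ε`, differentiable at `0` by the
chain rule; its right difference quotients converge to that derivative.
-/

open MeasureTheory Real Set Filter
open scoped Topology

theorem integral_add_smul_dirac {α E : Type*} [MeasurableSpace α] [MeasurableSingletonClass α]
    [NormedAddCommGroup E] [NormedSpace ℝ E] [CompleteSpace E]
    {μ : Measure α} {f : α → E} (hf : Integrable f μ) (b : α) {ε : ℝ} (hε : 0 ≤ ε) :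
    ∫ x, f x ∂(μ + ENNReal.ofReal ε • Measure.dirac b) = ∫ x, f x ∂μ + ε • f b := by
  rw [integral_add_measure hf ((integrable_dirac enorm_lt_top).smul_measure ENNReal.ofReal_ne_top),
    integral_smul_measure, integral_dirac, ENNReal.toReal_ofReal hε]

theorem hasDerivAt_inv_add_mul_affine {z : ℝ} (hz : z ≠ 0) (I q : ℝ) :
    HasDerivAt (fun ε : ℝ => (z + ε)⁻¹ * (I + ε * q)) ((q - z⁻¹ * I) / z) 0 := by
  have hs : HasDerivAt (fun ε : ℝ => z + ε) 1 0 := (hasDerivAt_id' 0).const_add z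
  have hl : HasDerivAt (fun ε : ℝ => I + ε * q) q 0 := by
    simpa using ((hasDerivAt_id' 0).mul_const q).const_add I
  refine ((hs.inv (by simpa using hz)).fun_mul hl).congr_deriv ?_
  simp only [Pi.inv_apply, add_zero, zero_mul]
  field_simp
  ring

/-- `G_a(μ)` in terms of the mass `s = |μ|` and the mean `r = ⟨φ, μ̄⟩`, with `p = φ(a)`. -/
noncomputable def firstVariation (ψ ψ' : ℝ → ℝ) (p : ℝ) (m : ℕ) (s r : ℝ) : ℝ :=
  ψ' s * r ^ m + m * (ψ s / s) * (p * r ^ (m - 1) - r ^ m)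

/-- `F''(η; a, b)` in terms of `s = z`, `r = ⟨φ, ρ⟩`, `p = φ(a)` and `q = φ(b)`. -/
noncomputable def secondVariation (ψ ψ' : ℝ → ℝ) (ψ'' p q : ℝ) (m : ℕ) (s r : ℝ) : ℝ :=
  ψ'' * r ^ m + m * (ψ' s / s) * ((p + q) * r ^ (m - 1) - 2 * r ^ m)
    + m * (ψ s / s ^ 2) *
      ((m - 1) * (p * q) * r ^ (m - 2) - m * (p + q) * r ^ (m - 1) + (m + 1) * r ^ m)

theorem hasDerivAt_firstVariation {ψ ψ' : ℝ → ℝ} {ψ'' z : ℝ} (hz : z ≠ 0)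
    (hψ : HasDerivAt ψ (ψ' z) z) (hψ' : HasDerivAt ψ' ψ'' z) (p q I : ℝ) (m : ℕ) :
    HasDerivAt (fun ε => firstVariation ψ ψ' p m (z + ε) ((z + ε)⁻¹ * (I + ε * q)))
      (secondVariation ψ ψ' ψ'' p q m z (z⁻¹ * I)) 0 := by
  have hz0 : z + 0 = z := add_zero z
  have hs : HasDerivAt (fun ε : ℝ => z + ε) 1 0 := (hasDerivAt_id' 0).const_add z
  have hψs : HasDerivAt (fun ε => ψ (z + ε)) (ψ' z) 0 :=
    (show HasDerivAt ψ (ψ' z) (z + 0) by rwa [hz0]).comp_const_add z 0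
  have hψ's : HasDerivAt (fun ε => ψ' (z + ε)) ψ'' 0 :=
    (show HasDerivAt ψ' ψ'' (z + 0) by rwa [hz0]).comp_const_add z 0
  have hr := hasDerivAt_inv_add_mul_affine hz I q
  have hG := (hψ's.fun_mul (hr.fun_pow m)).fun_add
    (((hψs.fun_div hs (by simpa using hz)).const_mul (m : ℝ)).fun_mul
      (((hr.fun_pow (m - 1)).const_mul p).fun_sub (hr.fun_pow m)))
  refine hG.congr_deriv ?_
  simp only [add_zero, zero_mul, mul_one]
  -- the truncated exponents `m - 1`, `m - 2` agree with the true ones only for `m ≥ 2`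
  rcases m with _ | _ | k
  · simp [secondVariation]
  · simp only [secondVariation, zero_add, tsub_self, zero_tsub, pow_zero, pow_one, Nat.cast_zero,
      Nat.cast_one]
    field_simp
    ring
  · simp only [secondVariation, add_tsub_cancel_right, Nat.reduceSubDiff, pow_succ]
    push_cast
    field_simp
    ring

theorem stmt5_general (η : Measure unitInterval) [IsFiniteMeasure η] (hη : η Set.univ ≠ 0)
    (φ : unitInterval → ℝ) (hφm : Measurable φ) (C : ℝ) (hφb : ∀ x, |φ x| ≤ C)
    (m : ℕ) (ψ ψ' : ℝ → ℝ) (ψ'' : ℝ)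
    (hψ : HasDerivAt ψ (ψ' (η Set.univ).toReal) (η Set.univ).toReal)
    (hψ' : HasDerivAt ψ' ψ'' (η Set.univ).toReal)
    (a b : unitInterval) :
    Filter.Tendsto
      (fun ε : ℝ =>
        ε⁻¹ *
          ((ψ' ((η Set.univ).toReal + ε) *
              ((((η Set.univ).toReal + ε)⁻¹ *
                ∫ x, φ x ∂(η + ENNReal.ofReal ε • Measure.dirac b)) ^ m)
            + (m : ℝ) * (ψ ((η Set.univ).toReal + ε) / ((η Set.univ).toReal + ε)) *
              (φ a * ((((η Set.univ).toReal + ε)⁻¹ *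
                  ∫ x, φ x ∂(η + ENNReal.ofReal ε • Measure.dirac b)) ^ (m - 1))
                - ((((η Set.univ).toReal + ε)⁻¹ *
                  ∫ x, φ x ∂(η + ENNReal.ofReal ε • Measure.dirac b)) ^ m)))
          - (ψ' ((η Set.univ).toReal) * (∫ x, φ x ∂((η Set.univ)⁻¹ • η)) ^ m
            + (m : ℝ) * (ψ ((η Set.univ).toReal) / (η Set.univ).toReal) *
              (φ a * (∫ x, φ x ∂((η Set.univ)⁻¹ • η)) ^ (m - 1)
                - (∫ x, φ x ∂((η Set.univ)⁻¹ • η)) ^ m))))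
      (𝓝[>] 0)
      (𝓝 (ψ'' * (∫ x, φ x ∂((η Set.univ)⁻¹ • η)) ^ m
        + (m : ℝ) * (ψ' ((η Set.univ).toReal) / (η Set.univ).toReal) *
          ((φ a + φ b) * (∫ x, φ x ∂((η Set.univ)⁻¹ • η)) ^ (m - 1)
            - 2 * (∫ x, φ x ∂((η Set.univ)⁻¹ • η)) ^ m)
        + (m : ℝ) * (ψ ((η Set.univ).toReal) / (η Set.univ).toReal ^ 2) *
          (((m : ℝ) - 1) * (φ a * φ b) * (∫ x, φ x ∂((η Set.univ)⁻¹ • η)) ^ (m - 2)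
            - (m : ℝ) * (φ a + φ b) * (∫ x, φ x ∂((η Set.univ)⁻¹ • η)) ^ (m - 1)
            + ((m : ℝ) + 1) * (∫ x, φ x ∂((η Set.univ)⁻¹ • η)) ^ m))) := by
  have hz : 0 < (η Set.univ).toReal := ENNReal.toReal_pos hη (measure_ne_top η _)
  have hφ : Integrable φ η := .of_bound hφm.aestronglyMeasurable C
    (ae_of_all _ fun x => (Real.norm_eq_abs _).trans_le (hφb x))
  have hρ : ∫ x, φ x ∂((η Set.univ)⁻¹ • η) = (η Set.univ).toReal⁻¹ * ∫ x, φ x ∂η := by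
    rw [integral_smul_measure, ENNReal.toReal_inv, smul_eq_mul]
  have hG := HasDerivAt.tendsto_slope_zero_right
    (hasDerivAt_firstVariation hz.ne' hψ hψ' (φ a) (φ b) (∫ x, φ x ∂η) m)
  rw [hρ]
  refine hG.congr' ?_
  filter_upwards [self_mem_nhdsWithin] with ε (hε : 0 < ε)
  rw [integral_add_smul_dirac hφ b hε.le]
  simp only [firstVariation, smul_eq_mul, zero_add, add_zero, zero_mul]

/-- Second Gateaux derivative formula: the Gateaux derivative at `η` in direction `δ_b` of
`G_a(μ) = ψ'(|μ|)⟨φ,μ̄⟩^m + m(ψ(|μ|)/|μ|)(φ(a)⟨φ,μ̄⟩^{m-1} − ⟨φ,μ̄⟩^m)` equals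
`ψ''(z)⟨φ,ρ⟩^m + m(ψ'(z)/z)[(φ(a)+φ(b))⟨φ,ρ⟩^{m-1} − 2⟨φ,ρ⟩^m]`
`+ m(ψ(z)/z²)[(m−1)φ(a)φ(b)⟨φ,ρ⟩^{m-2} − m(φ(a)+φ(b))⟨φ,ρ⟩^{m-1} + (m+1)⟨φ,ρ⟩^m]`. -/
theorem stmt5 (η : Measure unitInterval) [IsFiniteMeasure η] (hη : η Set.univ ≠ 0)
    (φ : unitInterval → ℝ) (hφm : Measurable φ) (C : ℝ) (hφb : ∀ x, |φ x| ≤ C)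
    (m : ℕ) (hm : 1 ≤ m) (ψ ψ' : ℝ → ℝ) (ψ'' : ℝ)
    (hψ : HasDerivAt ψ (ψ' (η Set.univ).toReal) (η Set.univ).toReal)
    (hψ' : HasDerivAt ψ' ψ'' (η Set.univ).toReal)
    (a b : unitInterval) :
    Filter.Tendsto
      (fun ε : ℝ =>
        ε⁻¹ *
          ((ψ' ((η Set.univ).toReal + ε) *
              ((((η Set.univ).toReal + ε)⁻¹ *
                ∫ x, φ x ∂(η + ENNReal.ofReal ε • Measure.dirac b)) ^ m)
            + (m : ℝ) * (ψ ((η Set.univ).toReal + ε) / ((η Set.univ).toReal + ε)) *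
              (φ a * ((((η Set.univ).toReal + ε)⁻¹ *
                  ∫ x, φ x ∂(η + ENNReal.ofReal ε • Measure.dirac b)) ^ (m - 1))
                - ((((η Set.univ).toReal + ε)⁻¹ *
                  ∫ x, φ x ∂(η + ENNReal.ofReal ε • Measure.dirac b)) ^ m)))
          - (ψ' ((η Set.univ).toReal) * (∫ x, φ x ∂((η Set.univ)⁻¹ • η)) ^ m
            + (m : ℝ) * (ψ ((η Set.univ).toReal) / (η Set.univ).toReal) *
              (φ a * (∫ x, φ x ∂((η Set.univ)⁻¹ • η)) ^ (m - 1)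
                - (∫ x, φ x ∂((η Set.univ)⁻¹ • η)) ^ m))))
      (𝓝[>] 0)
      (𝓝 (ψ'' * (∫ x, φ x ∂((η Set.univ)⁻¹ • η)) ^ m
        + (m : ℝ) * (ψ' ((η Set.univ).toReal) / (η Set.univ).toReal) *
          ((φ a + φ b) * (∫ x, φ x ∂((η Set.univ)⁻¹ • η)) ^ (m - 1)
            - 2 * (∫ x, φ x ∂((η Set.univ)⁻¹ • η)) ^ m)
        + (m : ℝ) * (ψ ((η Set.univ).toReal) / (η Set.univ).toReal ^ 2) *
          (((m : ℝ) - 1) * (φ a * φ b) * (∫ x, φ x ∂((η Set.univ)⁻¹ • η)) ^ (m - 2)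
            - (m : ℝ) * (φ a + φ b) * (∫ x, φ x ∂((η Set.univ)⁻¹ • η)) ^ (m - 1)
            + ((m : ℝ) + 1) * (∫ x, φ x ∂((η Set.univ)⁻¹ • η)) ^ m))) :=
  stmt5_general η hη φ hφm C hφb m ψ ψ' ψ'' hψ hψ' a b
end

section
/- Let α ∈ (1,2), c, c' > 0, let η be a finite measure on [0,1] with total mass z := η([0,1]) > 0, let ρ := z⁻¹η, let φ : [0,1] → ℝ be bounded measurable and m ≥ 1 an integer. For h > 0 set r_h := h/(z+h). Then all integrals below converge absolutely, and z^{α−1}·{ ∫₀^∞ c'·h^{−α}·[ ⟨φ,(1−r_h)·ρ + r_h·δ₀⟩^m − ⟨φ,ρ⟩^m ] dh + ∫₀¹ η(da) ∫₀^∞ c·h^{−1−α}·[ ⟨φ,(η+h·δ_a)/(z+h)⟩^m − ⟨φ,ρ⟩^m − h·(m/z)·(φ(a)·⟨φ,ρ⟩^{m-1} − ⟨φ,ρ⟩^m) ] dh } = c'·∫₀¹ r^{−α}(1−r)^{α−2}·[ ⟨φ,(1−r)·ρ + r·δ₀⟩^m − ⟨φ,ρ⟩^m ] dr + c·∫₀¹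 r^{−1−α}(1−r)^{α−1}·( ∫₀¹ [ ⟨φ,(1−r)·ρ + r·δ_a⟩^m − ⟨φ,ρ⟩^m ] ρ(da) ) dr. -/
/-!
The substitution `h = z r / (1 - r)`, i.e. `r = h / (z + h)`, maps `(0, ∞)` onto `(0, 1)` and turns
`h ^ p dh` into `z ^ (p + 1) r ^ p (1 - r) ^ (-p - 2) dr`. Normalising `η + h δₐ` gives exactly
`(1 - r) ρ + r δₐ`, so both jump integrals become Fleming–Viot integrals with the factor
`z ^ (1 - α)`. In the branching part the compensator `(h / z) ⋅ m (φ(a) ⟨φ,ρ⟩ ^ (m-1) - ⟨φ,ρ⟩ ^ m)`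
integrates to zero against `η`, so after Fubini only `z ∫ (…) dρ` survives.

Convergence comes from the binomial expansion of `((1 - r) x + r y) ^ m`: the increment is `O(r)`,
it is `O(r²)` after subtracting its linear part (which has `ρ`-mean zero), and the compensated
branching increment is `O(r² / (1 - r))`; these are integrable against the beta weights since
`1 < α < 2`.
-/

open MeasureTheory Real Set

theorem integrableOn_rpow_mul_one_sub_rpow {p q : ℝ} (hp : -1 < p) (hq : -1 < q) :
    IntegrableOn (fun r : ℝ => r ^ p * (1 - r) ^ q) (Ioo 0 1) := by
  have hB := Complex.betaIntegral_convergent (u := p + 1) (v := q + 1)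
    (by simp; linarith) (by simp; linarith)
  rw [intervalIntegrable_iff_integrableOn_Ioo_of_le zero_le_one] at hB
  refine IntegrableOn.congr_fun hB.norm (fun r hr => ?_) measurableSet_Ioo
  have h1r : 0 < 1 - r := sub_pos.mpr hr.2
  simp only [add_sub_cancel_right, norm_mul]
  rw [Complex.norm_cpow_eq_rpow_re_of_pos hr.1, ← Complex.ofReal_one, ← Complex.ofReal_sub,
    Complex.norm_cpow_eq_rpow_re_of_pos h1r]
  simp

theorem integrableOn_Ioo_of_abs_le {f : ℝ → ℝ} {p q C : ℝ} (hp : -1 < p) (hq : -1 < q)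
    (hf : AEStronglyMeasurable f (volume.restrict (Ioo 0 1)))
    (hle : ∀ r ∈ Ioo (0 : ℝ) 1, |f r| ≤ C * (r ^ p * (1 - r) ^ q)) :
    IntegrableOn f (Ioo 0 1) :=
  ((integrableOn_rpow_mul_one_sub_rpow hp hq).const_mul C).mono' hf <|
    ae_restrict_of_forall_mem measurableSet_Ioo hle

section ChangeOfVariables

variable {z : ℝ}

theorem image_mul_div_one_sub_Ioo (hz : 0 < z) :
    (fun r : ℝ => z * r / (1 - r)) '' Ioo 0 1 = Ioi 0 := by
  ext h
  simp only [mem_image, mem_Ioi, mem_Ioo]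
  constructor
  · rintro ⟨r, ⟨hr0, hr1⟩, rfl⟩
    exact div_pos (mul_pos hz hr0) (sub_pos.mpr hr1)
  · intro hh
    refine ⟨h / (z + h), ⟨by positivity, (div_lt_one (by positivity)).mpr (by linarith)⟩, ?_⟩
    field_simp
    simp [hz.ne']

theorem injOn_mul_div_one_sub (hz : z ≠ 0) : InjOn (fun r : ℝ => z * r / (1 - r)) (Ioo 0 1) := by
  intro r₁ hr₁ r₂ hr₂ h
  have h₁ : 1 - r₁ ≠ 0 := (sub_pos.mpr hr₁.2).ne'
  have h₂ : 1 - r₂ ≠ 0 := (sub_pos.mpr hr₂.2).ne'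
  field_simp at h
  linarith

theorem hasDerivAt_mul_div_one_sub (z : ℝ) {r : ℝ} (hr : r ≠ 1) :
    HasDerivAt (fun r : ℝ => z * r / (1 - r)) (z / (1 - r) ^ 2) r := by
  have h1r : 1 - r ≠ 0 := sub_ne_zero.mpr hr.symm
  refine (((hasDerivAt_id' r).const_mul z).div ((hasDerivAt_id' r).const_sub 1) h1r).congr_deriv ?_
  ring

variable {p q : ℝ}

theorem abs_deriv_smul_rpow_mul_comp (hz : 0 < z) (hpq : p + q = -2) (G : ℝ → ℝ) {r : ℝ}
    (hr : r ∈ Ioo 0 1) :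
    |z / (1 - r) ^ 2| • ((z * r / (1 - r)) ^ p * G (z * r / (1 - r) / (z + z * r / (1 - r)))) =
      z ^ (p + 1) * (r ^ p * (1 - r) ^ q * G r) := by
  obtain ⟨hr0, hr1⟩ := hr
  have h1r : 0 < 1 - r := sub_pos.mpr hr1
  have hcomp : z * r / (1 - r) / (z + z * r / (1 - r)) = r := by
    field_simp
    ring
  have hq : (1 - r) ^ q = ((1 - r) ^ p)⁻¹ / (1 - r) ^ 2 := by
    rw [show q = -p + (-2 : ℤ) by push_cast; linarith, rpow_add h1r, rpow_neg h1r.le,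
      rpow_intCast, zpow_neg, zpow_ofNat, div_eq_mul_inv]
  rw [hcomp, smul_eq_mul, abs_of_pos (by positivity), div_rpow (by positivity) h1r.le,
    mul_rpow hz.le hr0.le, rpow_add_one hz.ne', hq]
  have : 0 < (1 - r) ^ p := rpow_pos_of_pos h1r p
  field_simp

theorem integrableOn_Ioi_rpow_mul_comp_iff (hz : 0 < z) (hpq : p + q = -2) (G : ℝ → ℝ) :
    IntegrableOn (fun h => h ^ p * G (h / (z + h))) (Ioi 0) ↔
      IntegrableOn (fun r => r ^ p * (1 - r) ^ q * G r) (Ioo 0 1) := by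
  rw [← image_mul_div_one_sub_Ioo hz, integrableOn_image_iff_integrableOn_abs_deriv_smul
    measurableSet_Ioo (fun r hr => (hasDerivAt_mul_div_one_sub z hr.2.ne).hasDerivWithinAt)
    (injOn_mul_div_one_sub hz.ne'), integrableOn_congr_fun
    (fun r hr => abs_deriv_smul_rpow_mul_comp hz hpq G hr) measurableSet_Ioo]
  exact integrable_const_mul_iff (IsUnit.mk0 _ (rpow_pos_of_pos hz _).ne') _

theorem integral_Ioi_rpow_mul_comp (hz : 0 < z) (hpq : p + q = -2) (G : ℝ → ℝ) :
    ∫ h in Ioi 0, h ^ p * G (h / (z + h)) =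
      z ^ (p + 1) * ∫ r in Ioo 0 1, r ^ p * (1 - r) ^ q * G r := by
  rw [← image_mul_div_one_sub_Ioo hz, integral_image_eq_integral_abs_deriv_smul
    measurableSet_Ioo (fun r hr => (hasDerivAt_mul_div_one_sub z hr.2.ne).hasDerivWithinAt)
    (injOn_mul_div_one_sub hz.ne'), setIntegral_congr_fun measurableSet_Ioo
    (fun r hr => abs_deriv_smul_rpow_mul_comp hz hpq G hr), integral_const_mul]

end ChangeOfVariables

theorem add_pow_eq_sum_choose_mul (x y : ℝ) (m : ℕ) :
    (x + y) ^ m = ∑ k ∈ Finset.range (m + 1), (m.choose k : ℝ) * x ^ (m - k) * y ^ k := by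
  rw [add_comm, add_pow]
  exact Finset.sum_congr rfl fun k _ => by ring

theorem abs_add_mul_pow_sub_sum_le (x u : ℝ) {r : ℝ} (hr : r ∈ Icc 0 1) {m j : ℕ}
    (hj : j ≤ m + 1) :
    |(x + r * u) ^ m - ∑ k ∈ Finset.range j, (m.choose k : ℝ) * x ^ (m - k) * (r * u) ^ k| ≤
      r ^ j * (|x| + |u|) ^ m := by
  obtain ⟨hr0, hr1⟩ := hr
  rw [add_pow_eq_sum_choose_mul, ← Finset.sum_range_add_sum_Ico _ hj, add_sub_cancel_left,
    add_pow_eq_sum_choose_mul, Finset.mul_sum]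
  refine (Finset.abs_sum_le_sum_abs _ _).trans ?_
  refine (Finset.sum_le_sum fun k hk => ?_).trans <|
    Finset.sum_le_sum_of_subset_of_nonneg
      (fun k hk => Finset.mem_range.mpr (Finset.mem_Ico.mp hk).2) fun _ _ _ => by positivity
  have hrk : r ^ k ≤ r ^ j := pow_le_pow_of_le_one hr0 hr1 (Finset.mem_Ico.mp hk).1
  rw [abs_mul, abs_mul, Nat.abs_cast, abs_pow, mul_pow, abs_mul, abs_pow, abs_pow,
    abs_of_nonneg hr0]
  calc (m.choose k : ℝ) * |x| ^ (m - k) * (r ^ k * |u| ^ k)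
      ≤ (m.choose k : ℝ) * |x| ^ (m - k) * (r ^ j * |u| ^ k) := by gcongr
    _ = r ^ j * ((m.choose k : ℝ) * |x| ^ (m - k) * |u| ^ k) := by ring

section ConvexCombPow

variable {x y C r : ℝ}

theorem abs_convexComb_pow_sub_pow_le (hx : |x| ≤ C) (hy : |y| ≤ C) (hr : r ∈ Icc 0 1)
    (m : ℕ) : |((1 - r) * x + r * y) ^ m - x ^ m| ≤ (3 * C) ^ m * r := by
  have h := abs_add_mul_pow_sub_sum_le x (y - x) hr (j := 1) (m := m) (by omega)
  rw [show (1 - r) * x + r * y = x + r * (y - x) by ring]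
  simp only [Finset.sum_range_one, Nat.choose_zero_right, Nat.sub_zero, pow_zero, mul_one,
    Nat.cast_one, one_mul, pow_one] at h
  refine h.trans ?_
  rw [mul_comm]
  gcongr
  · exact hr.1
  · linarith [abs_sub y x]

theorem abs_convexComb_pow_sub_pow_sub_mul_le (hx : |x| ≤ C) (hy : |y| ≤ C)
    (hr : r ∈ Icc 0 1) (m : ℕ) :
    |((1 - r) * x + r * y) ^ m - x ^ m - r * (m * (y * x ^ (m - 1) - x ^ m))| ≤
      (3 * C) ^ m * r ^ 2 := by
  rcases m with _ | n
  · simp [sq_nonneg]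
  have h := abs_add_mul_pow_sub_sum_le x (y - x) hr (j := 2) (m := n + 1) (by omega)
  have hexp : ((1 - r) * x + r * y) ^ (n + 1) - x ^ (n + 1)
      - r * ((n + 1 : ℕ) * (y * x ^ (n + 1 - 1) - x ^ (n + 1))) =
      (x + r * (y - x)) ^ (n + 1) - ∑ k ∈ Finset.range 2,
        ((n + 1).choose k : ℝ) * x ^ (n + 1 - k) * (r * (y - x)) ^ k := by
    simp only [Nat.cast_add, Nat.cast_one, add_tsub_cancel_right, Finset.sum_range_succ,
      Finset.range_one, Finset.sum_singleton, Nat.choose_zero_right, tsub_zero, one_mul, pow_zero,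
      mul_one, Nat.choose_one_right, pow_one]
    ring
  rw [hexp]
  refine h.trans ?_
  rw [mul_comm]
  gcongr
  linarith [abs_sub y x]

theorem abs_natCast_mul_sub_pow_le (hx : |x| ≤ C) (hy : |y| ≤ C) (m : ℕ) :
    |m * (y * x ^ (m - 1) - x ^ m)| ≤ 2 * (3 * C) ^ m := by
  have h₁ := abs_convexComb_pow_sub_pow_le hx hy (r := 1) (by simp) m
  have h₂ := abs_convexComb_pow_sub_pow_sub_mul_le hx hy (r := 1) (by simp) m
  simp only [sub_self, zero_mul, zero_add, one_mul, one_pow, mul_one] at h₁ h₂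
  calc |m * (y * x ^ (m - 1) - x ^ m)|
      = |(y ^ m - x ^ m) - (y ^ m - x ^ m - m * (y * x ^ (m - 1) - x ^ m))| := by ring_nf
    _ ≤ |y ^ m - x ^ m| + |y ^ m - x ^ m - m * (y * x ^ (m - 1) - x ^ m)| := abs_sub _ _
    _ ≤ 2 * (3 * C) ^ m := by linarith

theorem abs_convexComb_pow_sub_pow_sub_div_mul_le (hx : |x| ≤ C) (hy : |y| ≤ C)
    (hr : r ∈ Ico 0 1) (m : ℕ) :
    |((1 - r) * x + r * y) ^ m - x ^ m - r / (1 - r) * (m * (y * x ^ (m - 1) - x ^ m))| ≤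
      3 * (3 * C) ^ m * (r ^ 2 / (1 - r)) := by
  obtain ⟨hr0, hr1⟩ := hr
  have h1r : 0 < 1 - r := sub_pos.mpr hr1
  set d := (m : ℝ) * (y * x ^ (m - 1) - x ^ m)
  have hsq : r ^ 2 ≤ r ^ 2 / (1 - r) := le_div_self (sq_nonneg r) h1r (by linarith)
  have hC : 0 ≤ (3 * C) ^ m := by
    have : 0 ≤ C := (abs_nonneg x).trans hx
    positivity
  calc |((1 - r) * x + r * y) ^ m - x ^ m - r / (1 - r) * d|
      = |(((1 - r) * x + r * y) ^ m - x ^ m - r * d) - r ^ 2 / (1 - r) * d| := by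
        congr 1
        field_simp
        ring
    _ ≤ |((1 - r) * x + r * y) ^ m - x ^ m - r * d| + r ^ 2 / (1 - r) * |d| := by
        refine (abs_sub _ _).trans_eq ?_
        rw [abs_mul, abs_of_nonneg (show 0 ≤ r ^ 2 / (1 - r) by positivity)]
    _ ≤ (3 * C) ^ m * r ^ 2 + r ^ 2 / (1 - r) * (2 * (3 * C) ^ m) := by
        gcongr
        · exact abs_convexComb_pow_sub_pow_sub_mul_le hx hy ⟨hr0, hr1.le⟩ m
        · exact abs_natCast_mul_sub_pow_le hx hy m
    _ ≤ 3 * (3 * C) ^ m * (r ^ 2 / (1 - r)) := by nlinarith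

end ConvexCombPow

theorem integrableOn_Ioi_rpow_mul_sq_div {z : ℝ} (hz : 0 < z) {α : ℝ} (hα : α ∈ Ioo 1 2) :
    IntegrableOn (fun h => h ^ (-1 - α) * ((h / (z + h)) ^ 2 / (1 - h / (z + h)))) (Ioi 0) := by
  refine (integrableOn_Ioi_rpow_mul_comp_iff hz (p := -1 - α) (q := α - 1) (by ring)
    (fun r => r ^ 2 / (1 - r))).mpr ?_
  refine integrableOn_Ioo_of_abs_le (p := 1 - α) (q := α - 2) (C := 1) (by linarith [hα.2])
    (by linarith [hα.1]) (by fun_prop) fun r hr => le_of_eq ?_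
  have h1r := sub_pos.mpr hr.2
  have e₁ : r ^ (1 - α) = r ^ (-1 - α) * r ^ 2 := by
    rw [← rpow_two, ← rpow_add hr.1]
    ring_nf
  have e₂ : (1 - r) ^ (α - 2) = (1 - r) ^ (α - 1) / (1 - r) := by
    rw [show α - 2 = α - 1 - 1 by ring, rpow_sub_one h1r.ne' (α - 1)]
  rw [abs_of_pos (mul_pos (mul_pos (rpow_pos_of_pos hr.1 _) (rpow_pos_of_pos h1r _))
    (div_pos (pow_pos hr.1 2) h1r)), e₁, e₂]
  ring

section Increments

variable {X : Type*} [MeasurableSpace X]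

noncomputable def resamplingIncrement (φ : X → ℝ) (ρ : Measure X) (m : ℕ) (r : ℝ) (a : X) : ℝ :=
  (∫ x, φ x ∂(ENNReal.ofReal (1 - r) • ρ + ENNReal.ofReal r • Measure.dirac a)) ^ m
    - (∫ x, φ x ∂ρ) ^ m

/-- The jump of `F(η) = ⟨φ, η / |η|⟩ ^ m` along `η ↦ η + h δₐ`, minus its first-order part in
`h`. -/
noncomputable def branchingIncrement (φ : X → ℝ) (η : Measure X) (m : ℕ) (h : ℝ) (a : X) : ℝ :=
  (((η univ).toReal + h)⁻¹ * ∫ x, φ x ∂(η + ENNReal.ofReal h • Measure.dirac a)) ^ m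
    - (∫ x, φ x ∂((η univ)⁻¹ • η)) ^ m
    - h * (((m : ℝ) / (η univ).toReal) *
      (φ a * (∫ x, φ x ∂((η univ)⁻¹ • η)) ^ (m - 1) - (∫ x, φ x ∂((η univ)⁻¹ • η)) ^ m))

variable {φ : X → ℝ} {Cb : ℝ}

theorem integrable_of_abs_le {μ : Measure X} [IsFiniteMeasure μ] (hφm : Measurable φ)
    (hφb : ∀ x, |φ x| ≤ Cb) : Integrable φ μ :=
  .of_bound hφm.aestronglyMeasurable Cb (ae_of_all _ fun x => (norm_eq_abs _).trans_le (hφb x))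

theorem abs_integral_le_of_abs_le {μ : Measure X} [IsProbabilityMeasure μ]
    (hφb : ∀ x, |φ x| ≤ Cb) : |∫ x, φ x ∂μ| ≤ Cb := by
  simpa using norm_integral_le_of_norm_le_const (μ := μ) (f := φ)
    (ae_of_all _ fun x => (norm_eq_abs _).trans_le (hφb x))

theorem integral_inv_measure_univ_smul (η : Measure X) (f : X → ℝ) :
    ∫ x, f x ∂((η univ)⁻¹ • η) = ((η univ).toReal)⁻¹ * ∫ x, f x ∂η := by
  rw [integral_smul_measure, ENNReal.toReal_inv, smul_eq_mul]

theorem toReal_measure_univ_pos (η : Measure X) [IsFiniteMeasure η] [NeZero η] :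
    0 < (η univ).toReal :=
  ENNReal.toReal_pos (NeZero.ne _) (measure_ne_top _ _)

theorem integral_natCast_mul_sub_pow_eq_zero {μ : Measure X} [IsFiniteMeasure μ]
    (hφ : Integrable φ μ) {x : ℝ} (hx : ∫ a, φ a ∂μ = μ.real univ * x) (m : ℕ) :
    ∫ a, (m : ℝ) * (φ a * x ^ (m - 1) - x ^ m) ∂μ = 0 := by
  rw [integral_const_mul, integral_sub (hφ.mul_const _) (integrable_const _), integral_mul_const,
    integral_const, hx, smul_eq_mul]
  rcases m with _ | n
  · simp
  · simp only [add_tsub_cancel_right, pow_succ]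
    ring

variable [MeasurableSingletonClass X]

theorem integral_convexComb_dirac {ρ : Measure X} (hφ : Integrable φ ρ) {r : ℝ}
    (hr : r ∈ Icc 0 1) (a : X) :
    ∫ x, φ x ∂(ENNReal.ofReal (1 - r) • ρ + ENNReal.ofReal r • Measure.dirac a) =
      (1 - r) * ∫ x, φ x ∂ρ + r * φ a := by
  rw [integral_add_measure (hφ.smul_measure ENNReal.ofReal_ne_top)
    ((integrable_dirac (a := a) (f := φ) enorm_lt_top).smul_measure ENNReal.ofReal_ne_top),
    integral_smul_measure, integral_smul_measure, integral_dirac,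
    ENNReal.toReal_ofReal (sub_nonneg.mpr hr.2), ENNReal.toReal_ofReal hr.1, smul_eq_mul,
    smul_eq_mul]

theorem integral_add_smul_dirac_s9 {η : Measure X} (hφ : Integrable φ η) {h : ℝ} (hh : 0 ≤ h)
    (a : X) : ∫ x, φ x ∂(η + ENNReal.ofReal h • Measure.dirac a) = ∫ x, φ x ∂η + h * φ a := by
  rw [integral_add_measure hφ
    ((integrable_dirac (a := a) (f := φ) enorm_lt_top).smul_measure ENNReal.ofReal_ne_top),
    integral_smul_measure, integral_dirac, ENNReal.toReal_ofReal hh, smul_eq_mul]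

theorem resamplingIncrement_eq {ρ : Measure X} (hφ : Integrable φ ρ) (m : ℕ) {r : ℝ}
    (hr : r ∈ Icc 0 1) (a : X) :
    resamplingIncrement φ ρ m r a =
      ((1 - r) * ∫ x, φ x ∂ρ + r * φ a) ^ m - (∫ x, φ x ∂ρ) ^ m := by
  rw [resamplingIncrement, integral_convexComb_dirac hφ hr]

theorem abs_integral_resamplingIncrement_le {ρ : Measure X} [IsProbabilityMeasure ρ]
    (hφm : Measurable φ) (hφb : ∀ x, |φ x| ≤ Cb) (m : ℕ) {r : ℝ} (hr : r ∈ Icc 0 1) :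
    |∫ a, resamplingIncrement φ ρ m r a ∂ρ| ≤ (3 * Cb) ^ m * r ^ 2 := by
  have hφ : Integrable φ ρ := integrable_of_abs_le hφm hφb
  have hI := abs_integral_le_of_abs_le (μ := ρ) hφb
  set I := ∫ x, φ x ∂ρ
  have hT : Integrable (fun a => ((1 - r) * I + r * φ a) ^ m - I ^ m) ρ :=
    integrable_of_abs_le (by fun_prop) fun a => abs_convexComb_pow_sub_pow_le hI (hφb a) hr m
  have hD : Integrable (fun a => (m : ℝ) * (φ a * I ^ (m - 1) - I ^ m)) ρ :=
    ((hφ.mul_const _).sub (integrable_const _)).const_mul _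
  calc |∫ a, resamplingIncrement φ ρ m r a ∂ρ|
      = |∫ a, (((1 - r) * I + r * φ a) ^ m - I ^ m) ∂ρ| := by
        rw [integral_congr_ae (ae_of_all _ (resamplingIncrement_eq hφ m hr))]
    _ = |∫ a, (((1 - r) * I + r * φ a) ^ m - I ^ m
          - r * (m * (φ a * I ^ (m - 1) - I ^ m))) ∂ρ| := by
        rw [integral_sub hT (hD.const_mul r), integral_const_mul,
          integral_natCast_mul_sub_pow_eq_zero hφ (by simp [I]) m, mul_zero, sub_zero]
    _ ≤ (3 * Cb) ^ m * r ^ 2 := by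
        simpa using norm_integral_le_of_norm_le_const (μ := ρ) <| ae_of_all _ fun a =>
          (norm_eq_abs _).trans_le (abs_convexComb_pow_sub_pow_sub_mul_le hI (hφb a) hr m)

theorem integrableOn_resamplingIncrement {ρ : Measure X} [IsProbabilityMeasure ρ]
    (hφm : Measurable φ) (hφb : ∀ x, |φ x| ≤ Cb) {p q : ℝ} (hp : -2 < p) (hq : -1 < q)
    (m : ℕ) (a : X) :
    IntegrableOn (fun r => r ^ p * (1 - r) ^ q * resamplingIncrement φ ρ m r a) (Ioo 0 1) := by
  have hφ : Integrable φ ρ := integrable_of_abs_le hφm hφb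
  have hI := abs_integral_le_of_abs_le (μ := ρ) hφb
  set I := ∫ x, φ x ∂ρ
  have hclosed : IntegrableOn
      (fun r => r ^ p * (1 - r) ^ q * (((1 - r) * I + r * φ a) ^ m - I ^ m)) (Ioo 0 1) := by
    refine integrableOn_Ioo_of_abs_le (p := p + 1) (C := (3 * Cb) ^ m) (by linarith) hq
      (by fun_prop) fun r hr => ?_
    have hw : 0 < r ^ p * (1 - r) ^ q := mul_pos (rpow_pos_of_pos hr.1 _)
      (rpow_pos_of_pos (sub_pos.mpr hr.2) _)
    rw [abs_mul, abs_of_pos hw, rpow_add_one hr.1.ne']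
    calc r ^ p * (1 - r) ^ q * |((1 - r) * I + r * φ a) ^ m - I ^ m|
        ≤ r ^ p * (1 - r) ^ q * ((3 * Cb) ^ m * r) := by
          gcongr
          exact abs_convexComb_pow_sub_pow_le hI (hφb a) (Ioo_subset_Icc_self hr) m
      _ = (3 * Cb) ^ m * (r ^ p * r * (1 - r) ^ q) := by ring
  refine hclosed.congr_fun (fun r hr => ?_) measurableSet_Ioo
  rw [resamplingIncrement_eq hφ m (Ioo_subset_Icc_self hr)]

theorem integrableOn_integral_resamplingIncrement {ρ : Measure X} [IsProbabilityMeasure ρ]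
    (hφm : Measurable φ) (hφb : ∀ x, |φ x| ≤ Cb) {p q : ℝ} (hp : -3 < p) (hq : -1 < q)
    (m : ℕ) :
    IntegrableOn (fun r => r ^ p * (1 - r) ^ q * ∫ a, resamplingIncrement φ ρ m r a ∂ρ)
      (Ioo 0 1) := by
  have hφ : Integrable φ ρ := integrable_of_abs_le hφm hφb
  have hS : Measurable fun r => ∫ a, (((1 - r) * ∫ x, φ x ∂ρ + r * φ a) ^ m
      - (∫ x, φ x ∂ρ) ^ m) ∂ρ :=
    (StronglyMeasurable.integral_prod_right' (f := fun q : ℝ × X =>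
      ((1 - q.1) * ∫ x, φ x ∂ρ + q.1 * φ q.2) ^ m - (∫ x, φ x ∂ρ) ^ m)
      (by fun_prop)).measurable
  refine integrableOn_Ioo_of_abs_le (p := p + 2) (C := (3 * Cb) ^ m) (by linarith) hq ?_
    fun r hr => ?_
  · refine (Measurable.aestronglyMeasurable
      ((by fun_prop : Measurable fun r : ℝ => r ^ p * (1 - r) ^ q).mul hS)).congr ?_
    refine ae_restrict_of_forall_mem measurableSet_Ioo fun r hr => ?_
    simp_rw [Pi.mul_apply, resamplingIncrement_eq hφ m (Ioo_subset_Icc_self hr)]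
  · have hw : 0 < r ^ p * (1 - r) ^ q := mul_pos (rpow_pos_of_pos hr.1 _)
      (rpow_pos_of_pos (sub_pos.mpr hr.2) _)
    rw [abs_mul, abs_of_pos hw, rpow_add hr.1, rpow_two]
    calc r ^ p * (1 - r) ^ q * |∫ a, resamplingIncrement φ ρ m r a ∂ρ|
        ≤ r ^ p * (1 - r) ^ q * ((3 * Cb) ^ m * r ^ 2) := by
          gcongr
          exact abs_integral_resamplingIncrement_le hφm hφb m (Ioo_subset_Icc_self hr)
      _ = (3 * Cb) ^ m * (r ^ p * r ^ 2 * (1 - r) ^ q) := by ring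

theorem integrableOn_Ioi_resamplingIncrement {ρ : Measure X} [IsProbabilityMeasure ρ]
    (hφm : Measurable φ) (hφb : ∀ x, |φ x| ≤ Cb) {z : ℝ} (hz : 0 < z) {α : ℝ}
    (hα : α ∈ Ioo 1 2) (c : ℝ) (m : ℕ) (a : X) :
    IntegrableOn (fun h => c * h ^ (-α) * resamplingIncrement φ ρ m (h / (z + h)) a)
      (Ioi 0) := by
  have h := (integrableOn_Ioi_rpow_mul_comp_iff hz (p := -α) (q := α - 2) (by ring)
    (fun r => resamplingIncrement φ ρ m r a)).mpr
      (integrableOn_resamplingIncrement hφm hφb (by linarith [hα.2]) (by linarith [hα.1]) m a)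
  simp only [IntegrableOn, mul_assoc] at h ⊢
  exact h.const_mul c

variable {η : Measure X} [IsFiniteMeasure η] [NeZero η]

theorem inv_mul_integral_add_smul_dirac (hφ : Integrable φ η) {h : ℝ} (hh : 0 ≤ h) (a : X) :
    ((η univ).toReal + h)⁻¹ * ∫ x, φ x ∂(η + ENNReal.ofReal h • Measure.dirac a) =
      (1 - h / ((η univ).toReal + h)) * ∫ x, φ x ∂((η univ)⁻¹ • η) +
        h / ((η univ).toReal + h) * φ a := by
  have hz := toReal_measure_univ_pos η
  rw [integral_add_smul_dirac_s9 hφ hh, integral_inv_measure_univ_smul]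
  field_simp
  ring

theorem abs_branchingIncrement_le (hφm : Measurable φ) (hφb : ∀ x, |φ x| ≤ Cb) (m : ℕ)
    {h : ℝ} (hh : 0 ≤ h) (a : X) :
    |branchingIncrement φ η m h a| ≤
      3 * (3 * Cb) ^ m * ((h / ((η univ).toReal + h)) ^ 2 / (1 - h / ((η univ).toReal + h))) := by
  have hz := toReal_measure_univ_pos η
  have hI := abs_integral_le_of_abs_le (μ := (η univ)⁻¹ • η) hφb
  rw [branchingIncrement, inv_mul_integral_add_smul_dirac (integrable_of_abs_le hφm hφb) hh]
  generalize (η univ).toReal = z at hz ⊢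
  have hr : h / (z + h) ∈ Ico 0 1 :=
    ⟨by positivity, (div_lt_one (by positivity)).mpr (by linarith)⟩
  convert abs_convexComb_pow_sub_pow_sub_div_mul_le hI (hφb a) hr m using 3
  have hzh : z + h ≠ 0 := by positivity
  rw [one_sub_div hzh, add_sub_cancel_right, div_div_div_cancel_right₀ hzh]
  ring

theorem integrable_branchingIncrement (hφm : Measurable φ) (hφb : ∀ x, |φ x| ≤ Cb) {α : ℝ}
    (hα : α ∈ Ioo 1 2) (c : ℝ) (m : ℕ) :
    Integrable (fun p : X × ℝ => c * p.2 ^ (-1 - α) * branchingIncrement φ η m p.2 p.1)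
      (η.prod (volume.restrict (Ioi 0))) := by
  have hz := toReal_measure_univ_pos η
  have hφ : Integrable φ η := integrable_of_abs_le hφm hφb
  have hpos : ∀ᵐ p ∂(η.prod (volume.restrict (Ioi (0 : ℝ)))), 0 < p.2 :=
    Measure.quasiMeasurePreserving_snd.ae (ae_restrict_mem measurableSet_Ioi)
  refine (((integrableOn_Ioi_rpow_mul_sq_div hz hα).const_mul
    (|c| * (3 * (3 * Cb) ^ m))).comp_snd η).mono' ?_ ?_
  · set I := ∫ x, φ x ∂((η univ)⁻¹ • η)
    set z := (η univ).toReal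
    refine (Measurable.aestronglyMeasurable (f := fun p : X × ℝ => c * p.2 ^ (-1 - α) *
      (((1 - p.2 / (z + p.2)) * I + p.2 / (z + p.2) * φ p.1) ^ m - I ^ m
        - p.2 * ((m / z) * (φ p.1 * I ^ (m - 1) - I ^ m)))) (by fun_prop)).congr ?_
    filter_upwards [hpos] with p hp
    rw [branchingIncrement, inv_mul_integral_add_smul_dirac hφ hp.le]
  · filter_upwards [hpos] with p hp
    rw [norm_eq_abs, abs_mul, abs_mul, abs_of_pos (rpow_pos_of_pos hp _)]
    calc |c| * p.2 ^ (-1 - α) * |branchingIncrement φ η m p.2 p.1|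
        ≤ |c| * p.2 ^ (-1 - α) * (3 * (3 * Cb) ^ m * ((p.2 / ((η univ).toReal + p.2)) ^ 2
          / (1 - p.2 / ((η univ).toReal + p.2)))) := by
          gcongr
          exact abs_branchingIncrement_le hφm hφb m hp.le p.1
      _ = _ := by ring

theorem integral_branchingIncrement (hφm : Measurable φ) (hφb : ∀ x, |φ x| ≤ Cb) (m : ℕ)
    {h : ℝ} (hh : 0 ≤ h) :
    ∫ a, branchingIncrement φ η m h a ∂η = (η univ).toReal *
      ∫ a, resamplingIncrement φ ((η univ)⁻¹ • η) m (h / ((η univ).toReal + h)) a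
        ∂((η univ)⁻¹ • η) := by
  have hz := toReal_measure_univ_pos η
  have hφ : Integrable φ η := integrable_of_abs_le hφm hφb
  have hφρ : Integrable φ ((η univ)⁻¹ • η) := integrable_of_abs_le hφm hφb
  have hI := abs_integral_le_of_abs_le (μ := (η univ)⁻¹ • η) hφb
  have hφη : ∫ x, φ x ∂η = η.real univ * ∫ x, φ x ∂((η univ)⁻¹ • η) := by
    rw [integral_inv_measure_univ_smul, measureReal_def, mul_inv_cancel_left₀ hz.ne']
  have hr : h / ((η univ).toReal + h) ∈ Icc 0 1 :=
    ⟨by positivity, (div_le_one (by positivity)).mpr (by linarith)⟩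
  set I := ∫ x, φ x ∂((η univ)⁻¹ • η)
  set r := h / ((η univ).toReal + h)
  have hT : Integrable (fun a => ((1 - r) * I + r * φ a) ^ m - I ^ m) η :=
    integrable_of_abs_le (by fun_prop) fun a => abs_convexComb_pow_sub_pow_le hI (hφb a) hr m
  have hD : Integrable (fun a => (m : ℝ) * (φ a * I ^ (m - 1) - I ^ m)) η :=
    ((hφ.mul_const _).sub (integrable_const _)).const_mul _
  calc ∫ a, branchingIncrement φ η m h a ∂η
      = ∫ a, (((1 - r) * I + r * φ a) ^ m - I ^ m
          - h / (η univ).toReal * (m * (φ a * I ^ (m - 1) - I ^ m))) ∂η := by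
        refine integral_congr_ae (ae_of_all _ fun a => ?_)
        rw [branchingIncrement, inv_mul_integral_add_smul_dirac hφ hh]
        ring
    _ = ∫ a, (((1 - r) * I + r * φ a) ^ m - I ^ m) ∂η := by
        rw [integral_sub hT (hD.const_mul _), integral_const_mul,
          integral_natCast_mul_sub_pow_eq_zero hφ hφη m, mul_zero, sub_zero]
    _ = (η univ).toReal * ∫ a, resamplingIncrement φ ((η univ)⁻¹ • η) m r a
          ∂((η univ)⁻¹ • η) := by
        rw [integral_congr_ae (ae_of_all _ (resamplingIncrement_eq hφρ m hr)),
          integral_inv_measure_univ_smul, mul_inv_cancel_left₀ hz.ne']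

theorem integral_integral_branchingIncrement (hφm : Measurable φ) (hφb : ∀ x, |φ x| ≤ Cb)
    {α : ℝ} (hα : α ∈ Ioo 1 2) (c : ℝ) (m : ℕ) :
    ∫ a, (∫ h in Ioi 0, c * h ^ (-1 - α) * branchingIncrement φ η m h a) ∂η =
      c * (η univ).toReal ^ (1 - α) * ∫ r in Ioo 0 1, r ^ (-1 - α) * (1 - r) ^ (α - 1) *
        ∫ a, resamplingIncrement φ ((η univ)⁻¹ • η) m r a ∂((η univ)⁻¹ • η) := by
  have hz := toReal_measure_univ_pos η
  rw [integral_integral_swap (f := fun a h => c * h ^ (-1 - α) * branchingIncrement φ η m h a)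
    (integrable_branchingIncrement hφm hφb hα c m)]
  calc ∫ h in Ioi 0, ∫ a, c * h ^ (-1 - α) * branchingIncrement φ η m h a ∂η
      = ∫ h in Ioi 0, c * (η univ).toReal * (h ^ (-1 - α) *
          ∫ a, resamplingIncrement φ ((η univ)⁻¹ • η) m (h / ((η univ).toReal + h)) a
            ∂((η univ)⁻¹ • η)) := by
        refine setIntegral_congr_fun measurableSet_Ioi fun h hh => ?_
        rw [integral_const_mul, integral_branchingIncrement hφm hφb m (le_of_lt hh)]
        ring
    _ = c * (η univ).toReal * ((η univ).toReal ^ (-1 - α + 1) *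
          ∫ r in Ioo 0 1, r ^ (-1 - α) * (1 - r) ^ (α - 1) *
            ∫ a, resamplingIncrement φ ((η univ)⁻¹ • η) m r a ∂((η univ)⁻¹ • η)) := by
        rw [integral_const_mul]
        congr 1
        exact integral_Ioi_rpow_mul_comp hz (p := -1 - α) (q := α - 1) (by ring)
          fun r => ∫ a, resamplingIncrement φ ((η univ)⁻¹ • η) m r a ∂((η univ)⁻¹ • η)
    _ = _ := by
        rw [show -1 - α + 1 = -α by ring, show 1 - α = -α + 1 by ring, rpow_add_one hz.ne']
        ring

theorem generator_identity (hφm : Measurable φ) (hφb : ∀ x, |φ x| ≤ Cb) {α : ℝ}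
    (hα : α ∈ Ioo 1 2) (c c' : ℝ) (m : ℕ) (a₀ : X) :
    (η univ).toReal ^ (α - 1) *
        ((∫ h in Ioi 0, c' * h ^ (-α) *
            resamplingIncrement φ ((η univ)⁻¹ • η) m (h / ((η univ).toReal + h)) a₀)
          + ∫ a, (∫ h in Ioi 0, c * h ^ (-1 - α) * branchingIncrement φ η m h a) ∂η) =
      c' * (∫ r in Ioo 0 1, r ^ (-α) * (1 - r) ^ (α - 2) *
          resamplingIncrement φ ((η univ)⁻¹ • η) m r a₀)
        + c * ∫ r in Ioo 0 1, r ^ (-1 - α) * (1 - r) ^ (α - 1) *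
          ∫ a, resamplingIncrement φ ((η univ)⁻¹ • η) m r a ∂((η univ)⁻¹ • η) := by
  have hz := toReal_measure_univ_pos η
  have himm : ∫ h in Ioi 0, c' * h ^ (-α) *
        resamplingIncrement φ ((η univ)⁻¹ • η) m (h / ((η univ).toReal + h)) a₀ =
      c' * ((η univ).toReal ^ (-α + 1) * ∫ r in Ioo 0 1, r ^ (-α) * (1 - r) ^ (α - 2) *
        resamplingIncrement φ ((η univ)⁻¹ • η) m r a₀) := by
    simp_rw [mul_assoc c']
    rw [integral_const_mul]
    congr 1
    exact integral_Ioi_rpow_mul_comp hz (p := -α) (q := α - 2) (by ring)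
      fun r => resamplingIncrement φ ((η univ)⁻¹ • η) m r a₀
  have hinv : (η univ).toReal ^ (-α + 1) = ((η univ).toReal ^ (α - 1))⁻¹ := by
    rw [← rpow_neg hz.le, neg_sub, sub_eq_neg_add]
  have hne : (η univ).toReal ^ (α - 1) ≠ 0 := (rpow_pos_of_pos hz _).ne'
  rw [himm, integral_integral_branchingIncrement hφm hφb hα c m, show 1 - α = -α + 1 by ring,
    hinv]
  field_simp

end Increments

theorem stmt9_general (α : ℝ) (hα : α ∈ Ioo (1:ℝ) 2) (c c' : ℝ)
    (η : Measure unitInterval) [IsFiniteMeasure η] (hη : η Set.univ ≠ 0)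
    (φ : unitInterval → ℝ) (hφm : Measurable φ) (Cb : ℝ) (hφb : ∀ x, |φ x| ≤ Cb)
    (m : ℕ) :
    MeasureTheory.IntegrableOn
      (fun h : ℝ => c' * h ^ (-α) *
        ((∫ x, φ x ∂(ENNReal.ofReal (1 - h / ((η Set.univ).toReal + h)) •
              ((η Set.univ)⁻¹ • η)
            + ENNReal.ofReal (h / ((η Set.univ).toReal + h)) •
              Measure.dirac (0 : unitInterval))) ^ m
          - (∫ x, φ x ∂((η Set.univ)⁻¹ • η)) ^ m))
      (Ioi (0:ℝ))
    ∧ MeasureTheory.Integrable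
        (fun p : unitInterval × ℝ => c * p.2 ^ (-1 - α) *
          ((((η Set.univ).toReal + p.2)⁻¹ *
              ∫ x, φ x ∂(η + ENNReal.ofReal p.2 • Measure.dirac p.1)) ^ m
            - (∫ x, φ x ∂((η Set.univ)⁻¹ • η)) ^ m
            - p.2 * (((m : ℝ) / (η Set.univ).toReal) *
                (φ p.1 * (∫ x, φ x ∂((η Set.univ)⁻¹ • η)) ^ (m - 1)
                  - (∫ x, φ x ∂((η Set.univ)⁻¹ • η)) ^ m))))
        (η.prod (volume.restrict (Ioi (0:ℝ))))
    ∧ MeasureTheory.IntegrableOn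
        (fun r : ℝ => r ^ (-α) * (1 - r) ^ (α - 2) *
          ((∫ x, φ x ∂(ENNReal.ofReal (1 - r) • ((η Set.univ)⁻¹ • η)
              + ENNReal.ofReal r • Measure.dirac (0 : unitInterval))) ^ m
            - (∫ x, φ x ∂((η Set.univ)⁻¹ • η)) ^ m))
        (Ioo (0:ℝ) 1)
    ∧ MeasureTheory.IntegrableOn
        (fun r : ℝ => r ^ (-1 - α) * (1 - r) ^ (α - 1) *
          ∫ a, ((∫ x, φ x ∂(ENNReal.ofReal (1 - r) • ((η Set.univ)⁻¹ • η)
                + ENNReal.ofReal r • Measure.dirac a)) ^ m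
              - (∫ x, φ x ∂((η Set.univ)⁻¹ • η)) ^ m) ∂((η Set.univ)⁻¹ • η))
        (Ioo (0:ℝ) 1)
    ∧ (η Set.univ).toReal ^ (α - 1) *
        ((∫ h in Ioi (0:ℝ), c' * h ^ (-α) *
            ((∫ x, φ x ∂(ENNReal.ofReal (1 - h / ((η Set.univ).toReal + h)) •
                  ((η Set.univ)⁻¹ • η)
                + ENNReal.ofReal (h / ((η Set.univ).toReal + h)) •
                  Measure.dirac (0 : unitInterval))) ^ m
              - (∫ x, φ x ∂((η Set.univ)⁻¹ • η)) ^ m))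
          + ∫ a, (∫ h in Ioi (0:ℝ), c * h ^ (-1 - α) *
              ((((η Set.univ).toReal + h)⁻¹ *
                  ∫ x, φ x ∂(η + ENNReal.ofReal h • Measure.dirac a)) ^ m
                - (∫ x, φ x ∂((η Set.univ)⁻¹ • η)) ^ m
                - h * (((m : ℝ) / (η Set.univ).toReal) *
                    (φ a * (∫ x, φ x ∂((η Set.univ)⁻¹ • η)) ^ (m - 1)
                      - (∫ x, φ x ∂((η Set.univ)⁻¹ • η)) ^ m)))) ∂η) =
      c' * (∫ r in Ioo (0:ℝ) 1, r ^ (-α) * (1 - r) ^ (α - 2) *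
          ((∫ x, φ x ∂(ENNReal.ofReal (1 - r) • ((η Set.univ)⁻¹ • η)
              + ENNReal.ofReal r • Measure.dirac (0 : unitInterval))) ^ m
            - (∫ x, φ x ∂((η Set.univ)⁻¹ • η)) ^ m))
        + c * (∫ r in Ioo (0:ℝ) 1, r ^ (-1 - α) * (1 - r) ^ (α - 1) *
            ∫ a, ((∫ x, φ x ∂(ENNReal.ofReal (1 - r) • ((η Set.univ)⁻¹ • η)
                  + ENNReal.ofReal r • Measure.dirac a)) ^ m
                - (∫ x, φ x ∂((η Set.univ)⁻¹ • η)) ^ m) ∂((η Set.univ)⁻¹ • η)) := by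
  have : NeZero η := ⟨Measure.measure_univ_ne_zero.mp hη⟩
  exact ⟨integrableOn_Ioi_resamplingIncrement hφm hφb (toReal_measure_univ_pos η) hα c' m 0,
    integrable_branchingIncrement hφm hφb hα c m,
    integrableOn_resamplingIncrement hφm hφb (by linarith [hα.2]) (by linarith [hα.1]) m 0,
    integrableOn_integral_resamplingIncrement hφm hφb (by linarith [hα.2]) (by linarith [hα.1]) m,
    generator_identity hφm hφb hα c c' m 0⟩

/-- Lemma 5.5 of the paper: the generator of the measure-valued α-stable branching process
with immigration (Lévy measures `c'h^{−α}dh` and `ch^{−1−α}dh`), applied to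
`F(η) = ⟨φ,η/|η|⟩^m`, equals `|η|^{1−α}` times the generator of the M-generalized
Fleming-Viot process with immigration, `M = (c'Beta(2−α,α−1), cBeta(2−α,α))`;
all integrals converge absolutely. -/
theorem stmt9 (α : ℝ) (hα : α ∈ Ioo (1:ℝ) 2) (c c' : ℝ) (hc : 0 < c) (hc' : 0 < c')
    (η : Measure unitInterval) [IsFiniteMeasure η] (hη : η Set.univ ≠ 0)
    (φ : unitInterval → ℝ) (hφm : Measurable φ) (Cb : ℝ) (hφb : ∀ x, |φ x| ≤ Cb)
    (m : ℕ) (hm : 1 ≤ m) :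
    MeasureTheory.IntegrableOn
      (fun h : ℝ => c' * h ^ (-α) *
        ((∫ x, φ x ∂(ENNReal.ofReal (1 - h / ((η Set.univ).toReal + h)) •
              ((η Set.univ)⁻¹ • η)
            + ENNReal.ofReal (h / ((η Set.univ).toReal + h)) •
              Measure.dirac (0 : unitInterval))) ^ m
          - (∫ x, φ x ∂((η Set.univ)⁻¹ • η)) ^ m))
      (Ioi (0:ℝ))
    ∧ MeasureTheory.Integrable
        (fun p : unitInterval × ℝ => c * p.2 ^ (-1 - α) *
          ((((η Set.univ).toReal + p.2)⁻¹ *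
              ∫ x, φ x ∂(η + ENNReal.ofReal p.2 • Measure.dirac p.1)) ^ m
            - (∫ x, φ x ∂((η Set.univ)⁻¹ • η)) ^ m
            - p.2 * (((m : ℝ) / (η Set.univ).toReal) *
                (φ p.1 * (∫ x, φ x ∂((η Set.univ)⁻¹ • η)) ^ (m - 1)
                  - (∫ x, φ x ∂((η Set.univ)⁻¹ • η)) ^ m))))
        (η.prod (volume.restrict (Ioi (0:ℝ))))
    ∧ MeasureTheory.IntegrableOn
        (fun r : ℝ => r ^ (-α) * (1 - r) ^ (α - 2) *
          ((∫ x, φ x ∂(ENNReal.ofReal (1 - r) • ((η Set.univ)⁻¹ • η)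
              + ENNReal.ofReal r • Measure.dirac (0 : unitInterval))) ^ m
            - (∫ x, φ x ∂((η Set.univ)⁻¹ • η)) ^ m))
        (Ioo (0:ℝ) 1)
    ∧ MeasureTheory.IntegrableOn
        (fun r : ℝ => r ^ (-1 - α) * (1 - r) ^ (α - 1) *
          ∫ a, ((∫ x, φ x ∂(ENNReal.ofReal (1 - r) • ((η Set.univ)⁻¹ • η)
                + ENNReal.ofReal r • Measure.dirac a)) ^ m
              - (∫ x, φ x ∂((η Set.univ)⁻¹ • η)) ^ m) ∂((η Set.univ)⁻¹ • η))
        (Ioo (0:ℝ) 1)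
    ∧ (η Set.univ).toReal ^ (α - 1) *
        ((∫ h in Ioi (0:ℝ), c' * h ^ (-α) *
            ((∫ x, φ x ∂(ENNReal.ofReal (1 - h / ((η Set.univ).toReal + h)) •
                  ((η Set.univ)⁻¹ • η)
                + ENNReal.ofReal (h / ((η Set.univ).toReal + h)) •
                  Measure.dirac (0 : unitInterval))) ^ m
              - (∫ x, φ x ∂((η Set.univ)⁻¹ • η)) ^ m))
          + ∫ a, (∫ h in Ioi (0:ℝ), c * h ^ (-1 - α) *
              ((((η Set.univ).toReal + h)⁻¹ *
                  ∫ x, φ x ∂(η + ENNReal.ofReal h • Measure.dirac a)) ^ m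
                - (∫ x, φ x ∂((η Set.univ)⁻¹ • η)) ^ m
                - h * (((m : ℝ) / (η Set.univ).toReal) *
                    (φ a * (∫ x, φ x ∂((η Set.univ)⁻¹ • η)) ^ (m - 1)
                      - (∫ x, φ x ∂((η Set.univ)⁻¹ • η)) ^ m)))) ∂η) =
      c' * (∫ r in Ioo (0:ℝ) 1, r ^ (-α) * (1 - r) ^ (α - 2) *
          ((∫ x, φ x ∂(ENNReal.ofReal (1 - r) • ((η Set.univ)⁻¹ • η)
              + ENNReal.ofReal r • Measure.dirac (0 : unitInterval))) ^ m
            - (∫ x, φ x ∂((η Set.univ)⁻¹ • η)) ^ m))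
        + c * (∫ r in Ioo (0:ℝ) 1, r ^ (-1 - α) * (1 - r) ^ (α - 1) *
            ∫ a, ((∫ x, φ x ∂(ENNReal.ofReal (1 - r) • ((η Set.univ)⁻¹ • η)
                  + ENNReal.ofReal r • Measure.dirac a)) ^ m
                - (∫ x, φ x ∂((η Set.univ)⁻¹ • η)) ^ m) ∂((η Set.univ)⁻¹ • η)) :=
  stmt9_general α hα c c' η hη φ hφm Cb hφb m
end

section
/- Let ρ be a probability measure on [0,1], let p ≥ 1 be an integer, let g : [0,1]^p → ℝ be bounded measurable and symmetric, and let r ∈ [0,1]. Then | ∫ g d((1−r)·ρ + r·δ₀)^{⊗p} − ∫ g dρ^{⊗p} | ≤ 2^{p+1}·‖g‖_∞·r, where ‖g‖_∞ is the supremum norm of g. -/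
/-!
Write `μ = (1 - r) ρ + r δ₀`. Since `μ ≥ (1 - r) ρ`, the product measure satisfies
`μ^{⊗p} ≥ (1 - r)^p ρ^{⊗p}`, so `μ^{⊗p} = (1 - r)^p ρ^{⊗p} + λ` with `λ` a measure of mass
`1 - (1 - r)^p`. Hence the two integrals of `g` differ by at most `2 ‖g‖_∞ (1 - (1 - r)^p)`,
and Bernoulli's inequality bounds `1 - (1 - r)^p` by `p r ≤ 2^p r`.
-/

open MeasureTheory Real Set
open scoped NNReal ENNReal

namespace MeasureTheory.Measure

variable {ι : Type*} [Fintype ι] {α : ι → Type*} [∀ i, MeasurableSpace (α i)]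

theorem pi_mono {μ ν : ∀ i, Measure (α i)} (h : ∀ i, ν i ≤ μ i) :
    Measure.pi ν ≤ Measure.pi μ := by
  refine le_iff.2 fun s hs => ?_
  simp only [pi_def, toMeasure_apply _ _ hs]
  refine OuterMeasure.le_pi.2 (fun t _ => ?_) s
  exact (OuterMeasure.pi_pi_le _ t).trans (Finset.prod_le_prod' fun i _ => h i (t i))

theorem pi_smul (μ : ∀ i, Measure (α i)) [∀ i, SigmaFinite (μ i)] (c : ι → ℝ≥0) :
    Measure.pi (fun i => c i • μ i) = (∏ i, c i) • Measure.pi μ := by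
  refine pi_eq (μ := fun i => c i • μ i) fun s hs => ?_
  simp only [smul_apply, pi_pi, ENNReal.smul_def, smul_eq_mul,
    ENNReal.ofNNReal_finsetProd, Finset.prod_mul_distrib]

end MeasureTheory.Measure

section

variable {α E : Type*} [MeasurableSpace α] [NormedAddCommGroup E] [NormedSpace ℝ E]
  {μ ν : Measure α} {f : α → E} {C : ℝ}

theorem norm_integral_sub_integral_le_of_le [IsFiniteMeasure μ] (hνμ : ν ≤ μ)
    (hf : StronglyMeasurable f) (hfC : ∀ x, ‖f x‖ ≤ C) :
    ‖∫ x, f x ∂μ - ∫ x, f x ∂ν‖ ≤ C * (μ.real univ - ν.real univ) := by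
  have : IsFiniteMeasure ν := isFiniteMeasure_of_le μ hνμ
  have hint : ∀ (m : Measure α) [IsFiniteMeasure m], Integrable f m := fun m _ =>
    Integrable.of_bound hf.aestronglyMeasurable C (.of_forall hfC)
  have hsplit : μ = (μ - ν) + ν := (Measure.sub_add_cancel_of_le hνμ).symm
  calc ‖∫ x, f x ∂μ - ∫ x, f x ∂ν‖ = ‖∫ x, f x ∂(μ - ν)‖ := by
        conv_lhs => rw [hsplit, integral_add_measure (hint _) (hint _), add_sub_cancel_right]
    _ ≤ C * (μ - ν).real univ := norm_integral_le_of_norm_le_const (.of_forall hfC)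
    _ = C * (μ.real univ - ν.real univ) := by
        congr 1
        conv_rhs => enter [1]; rw [hsplit]
        rw [measureReal_add_apply, add_sub_cancel_right]

theorem norm_integral_sub_integral_le_of_smul_le [IsProbabilityMeasure μ] [IsProbabilityMeasure ν]
    {t : ℝ≥0} (htνμ : t • ν ≤ μ) (hf : StronglyMeasurable f) (hfC : ∀ x, ‖f x‖ ≤ C) :
    ‖∫ x, f x ∂μ - ∫ x, f x ∂ν‖ ≤ 2 * C * (1 - t) := by
  have ht : t ≤ 1 := by simpa using htνμ univ
  have hν : ‖∫ x, f x ∂ν‖ ≤ C := by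
    simpa using norm_integral_le_of_norm_le_const (μ := ν) (.of_forall hfC)
  have hμ : ‖∫ x, f x ∂μ - ∫ x, f x ∂(t • ν)‖ ≤ C * (1 - t) := by
    simpa [integral_smul_nnreal_measure] using norm_integral_sub_integral_le_of_le htνμ hf hfC
  calc ‖∫ x, f x ∂μ - ∫ x, f x ∂ν‖
      = ‖(∫ x, f x ∂μ - ∫ x, f x ∂(t • ν)) - (1 - (t : ℝ)) • ∫ x, f x ∂ν‖ := by
        rw [integral_smul_nnreal_measure, sub_smul, one_smul, NNReal.smul_def]
        congr 1; abel
    _ ≤ C * (1 - t) + (1 - t) * C := by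
        refine (norm_sub_le _ _).trans (add_le_add hμ ?_)
        rw [norm_smul, Real.norm_of_nonneg (by simpa using ht)]
        exact mul_le_mul_of_nonneg_left hν (by simpa using ht)
    _ = 2 * C * (1 - t) := by ring

end

theorem stmt12_general (ρ : Measure unitInterval) [IsProbabilityMeasure ρ]
    (p : ℕ)
    (g : (Fin p → unitInterval) → ℝ) (hgm : Measurable g)
    (C : ℝ) (hgb : ∀ x, |g x| ≤ C)
    (r : ℝ) (hr : r ∈ Icc (0:ℝ) 1) :
    |(∫ x, g x ∂(Measure.pi fun _ : Fin p =>
          ENNReal.ofReal (1 - r) • ρ + ENNReal.ofReal r • Measure.dirac (0 : unitInterval)))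
        - ∫ x, g x ∂(Measure.pi fun _ : Fin p => ρ)|
      ≤ 2 ^ (p + 1) * C * r := by
  obtain ⟨hr0, hr1⟩ := hr
  set μ := ENNReal.ofReal (1 - r) • ρ + ENNReal.ofReal r • Measure.dirac (0 : unitInterval)
  have : IsProbabilityMeasure μ := ⟨by
    simp [μ, ← ENNReal.ofReal_add (sub_nonneg.2 hr1) hr0]⟩
  have hle : (1 - r).toNNReal ^ p • Measure.pi (fun _ : Fin p => ρ) ≤ Measure.pi fun _ => μ :=
    calc (1 - r).toNNReal ^ p • Measure.pi (fun _ : Fin p => ρ)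
        = Measure.pi fun _ : Fin p => (1 - r).toNNReal • ρ := by simp [Measure.pi_smul]
      _ ≤ Measure.pi fun _ => μ := Measure.pi_mono fun _ => Measure.le_add_right le_rfl
  have hbernoulli : 1 - (1 - r) ^ p ≤ p * r := by
    nlinarith [one_add_mul_sub_le_pow (a := 1 - r) (by linarith) p]
  have hp_le : (p : ℝ) ≤ 2 ^ p := by exact_mod_cast Nat.lt_two_pow_self.le
  have hC : 0 ≤ C := (abs_nonneg _).trans (hgb 0)
  calc _ ≤ 2 * C * (1 - (1 - r) ^ p) := by
        simpa [Real.norm_eq_abs, sub_nonneg.2 hr1] using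
          norm_integral_sub_integral_le_of_smul_le hle hgm.stronglyMeasurable
            (fun x => (Real.norm_eq_abs _).trans_le (hgb x))
    _ ≤ 2 * C * (2 ^ p * r) := by
        gcongr
        exact hbernoulli.trans (mul_le_mul_of_nonneg_right hp_le hr0)
    _ = 2 ^ (p + 1) * C * r := by ring

/-- Bound from the proof of Lemma 5.1 (immigration part):
`|∫ g d((1−r)ρ + rδ₀)^{⊗p} − ∫ g dρ^{⊗p}| ≤ 2^{p+1} ‖g‖_∞ r`. -/
theorem stmt12 (ρ : Measure unitInterval) [IsProbabilityMeasure ρ]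
    (p : ℕ) (hp : 1 ≤ p)
    (g : (Fin p → unitInterval) → ℝ) (hgm : Measurable g)
    (C : ℝ) (hgb : ∀ x, |g x| ≤ C)
    (hsym : ∀ σ : Equiv.Perm (Fin p), ∀ x : Fin p → unitInterval, g (x ∘ σ) = g x)
    (r : ℝ) (hr : r ∈ Icc (0:ℝ) 1) :
    |(∫ x, g x ∂(Measure.pi fun _ : Fin p =>
          ENNReal.ofReal (1 - r) • ρ + ENNReal.ofReal r • Measure.dirac (0 : unitInterval)))
        - ∫ x, g x ∂(Measure.pi fun _ : Fin p => ρ)|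
      ≤ 2 ^ (p + 1) * C * r :=
  stmt12_general ρ p g hgm C hgb r hr
end
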